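/- Let 0 < κ ≤ 1 and for s ∈ ℂ with Re s > 0 set s_κ := (1/κ)·δ(e^{−κs}) = (2/κ)·tanh(κs/2). Then Re s_κ ≥ (1/2)·min{1, Re s} and |s_κ| ≤ 8/(κ²·min{1, Re s}). -/

import Mathlib

/-- The characteristic (transfer) function of the trapezoidal rule. -/
noncomputable def trDelta (ζ : ℂ) : ℂ := 2 * (1 - ζ) / (1 + ζ)

/-!
For `w = e^{-z}` with `r = ‖w‖ = e^{-Re z} < 1` one has `Re δ(w) = 2(1 - r²)/|1 + w|² ≥ 2(1 - r)/(1 + r)`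
and `|δ(w)| ≤ 2(1 + r)/(1 - r)`. Taking `z = κs` and `y = κ·min{1, Re s}`, which satisfies
`y ≤ Re z` and `y ≤ 1`, gives `r ≤ e^{-y}` and hence `(1 - r)/(1 + r) ≥ y/4`; dividing by `κ` yields
both bounds.
-/

open Complex

/-- The bound `e^{-y} ≤ 1/(1+y)` makes `(1-a)/(1+a) ≥ y/(2+y)`, which is at least `y/4` for `y ≤ 2`. -/
lemma div_four_le_one_sub_div_one_add {a y : ℝ} (hy0 : 0 ≤ y) (hy2 : y ≤ 2) (ha0 : 0 ≤ a)
    (ha : a ≤ Real.exp (-y)) : y / 4 ≤ (1 - a) / (1 + a) := by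
  have ha' : a * (1 + y) ≤ 1 := by
    have hexp : 1 + y ≤ Real.exp y := by linarith [Real.add_one_le_exp y]
    calc a * (1 + y) ≤ Real.exp (-y) * Real.exp y := by gcongr
      _ = 1 := by rw [← Real.exp_add, neg_add_cancel, Real.exp_zero]
  rw [div_le_div_iff₀ (by norm_num) (by linarith)]
  nlinarith [mul_nonneg ha0 (mul_nonneg hy0 (sub_nonneg.2 hy2))]

lemma trDelta_re (w : ℂ) : (trDelta w).re = 2 * (1 - normSq w) / normSq (1 + w) := by
  rw [trDelta, div_re, ← add_div, normSq_apply w]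
  congr 1
  simp only [mul_re, mul_im, sub_re, sub_im, add_re, add_im, one_re, one_im, re_ofNat, im_ofNat]
  ring

lemma two_mul_one_sub_div_one_add_le_re_trDelta {w : ℂ} (hw : ‖w‖ < 1) :
    2 * ((1 - ‖w‖) / (1 + ‖w‖)) ≤ (trDelta w).re := by
  have hpos : 0 < ‖1 + w‖ := norm_pos_iff.2 fun h => by
    rw [eq_neg_of_add_eq_zero_right h, norm_neg, norm_one] at hw; exact lt_irrefl _ hw
  have hnorm : ‖1 + w‖ ≤ 1 + ‖w‖ := by simpa using norm_add_le (1 : ℂ) w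
  calc 2 * ((1 - ‖w‖) / (1 + ‖w‖)) = 2 * (1 - ‖w‖ ^ 2) / (1 + ‖w‖) ^ 2 := by
        field_simp; ring
    _ ≤ 2 * (1 - ‖w‖ ^ 2) / ‖1 + w‖ ^ 2 := by
        gcongr
        nlinarith [norm_nonneg w]
    _ = (trDelta w).re := by rw [trDelta_re, normSq_eq_norm_sq, normSq_eq_norm_sq]

lemma norm_trDelta_le {w : ℂ} (hw : ‖w‖ < 1) :
    ‖trDelta w‖ ≤ 2 * ((1 + ‖w‖) / (1 - ‖w‖)) := by
  have hnum : ‖1 - w‖ ≤ 1 + ‖w‖ := by simpa using norm_sub_le (1 : ℂ) w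
  have hden : 1 - ‖w‖ ≤ ‖1 + w‖ := by simpa using norm_sub_norm_le (1 : ℂ) (-w)
  rw [trDelta, norm_div, norm_mul, Complex.norm_two, mul_div_assoc]
  gcongr

lemma norm_exp_neg_le_exp_neg {z : ℂ} {y : ℝ} (hyz : y ≤ z.re) :
    ‖exp (-z)‖ ≤ Real.exp (-y) := by
  rw [norm_exp, neg_re]
  exact Real.exp_le_exp.2 (neg_le_neg hyz)

lemma norm_exp_neg_lt_one {z : ℂ} (hz : 0 < z.re) : ‖exp (-z)‖ < 1 := by
  rw [norm_exp, neg_re, Real.exp_lt_one_iff, neg_lt_zero]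
  exact hz

lemma le_re_trDelta_exp_neg {z : ℂ} {y : ℝ} (hy0 : 0 < y) (hy2 : y ≤ 2) (hyz : y ≤ z.re) :
    y / 2 ≤ (trDelta (exp (-z))).re := by
  have h := div_four_le_one_sub_div_one_add hy0.le hy2 (norm_nonneg _)
    (norm_exp_neg_le_exp_neg hyz)
  linarith [two_mul_one_sub_div_one_add_le_re_trDelta (norm_exp_neg_lt_one (hy0.trans_le hyz))]

lemma norm_trDelta_exp_neg_le {z : ℂ} {y : ℝ} (hy0 : 0 < y) (hy2 : y ≤ 2) (hyz : y ≤ z.re) :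
    ‖trDelta (exp (-z))‖ ≤ 8 / y := by
  have h := inv_anti₀ (by positivity) (div_four_le_one_sub_div_one_add hy0.le hy2
    (norm_nonneg _) (norm_exp_neg_le_exp_neg hyz))
  rw [inv_div, inv_div] at h
  calc ‖trDelta (exp (-z))‖ ≤ 2 * ((1 + ‖exp (-z)‖) / (1 - ‖exp (-z)‖)) :=
        norm_trDelta_le (norm_exp_neg_lt_one (hy0.trans_le hyz))
    _ ≤ 2 * (4 / y) := by gcongr
    _ = 8 / y := by ring

theorem s_kappa_bounds (κ : ℝ) (hκ0 : 0 < κ) (hκ1 : κ ≤ 1)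
    (s : ℂ) (hs : 0 < s.re) :
    ((1 / κ : ℂ) * trDelta (Complex.exp (-(κ * s)))).re ≥ (1 / 2) * min 1 s.re ∧
    ‖(1 / κ : ℂ) * trDelta (Complex.exp (-(κ * s)))‖
      ≤ 8 / (κ ^ 2 * min 1 s.re) := by
  set m := min 1 s.re
  have hm0 : 0 < m := lt_min one_pos hs
  have hy0 : 0 < κ * m := mul_pos hκ0 hm0
  have hy2 : κ * m ≤ 2 := by nlinarith [min_le_left 1 s.re]
  have hyz : κ * m ≤ (κ * s).re := by
    rw [re_ofReal_mul]; exact mul_le_mul_of_nonneg_left (min_le_right _ _) hκ0.le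
  rw [one_div_mul_eq_div]
  constructor
  · rw [div_ofReal_re, ge_iff_le, le_div_iff₀ hκ0]
    linarith [le_re_trDelta_exp_neg hy0 hy2 hyz]
  · rw [norm_div, norm_real, Real.norm_of_nonneg hκ0.le, div_le_iff₀ hκ0]
    calc ‖trDelta (exp (-(κ * s)))‖ ≤ 8 / (κ * m) := norm_trDelta_exp_neg_le hy0 hy2 hyz
      _ = 8 / (κ ^ 2 * m) * κ := by field_simp
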